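/- For every integer m ≥ 0 and every real x with 0 < x ≤ m + 1/2, one has ( √((2m+1)² − 4x²) − 1 )/(2x) ≤ J_m'(x)/J_m(x) < m/x. -/

import Mathlib

open MeasureTheory Filter Set

/-- The Bessel function of the first kind of order `ν`:
`J_ν(x) = ∑ₖ (-1)^k / (k! Γ(ν+k+1)) (x/2)^(2k+ν)`. -/
noncomputable def besselJ (ν : ℝ) (x : ℝ) : ℝ :=
  ∑' k : ℕ, ((-1 : ℝ) ^ k / ((k.factorial : ℝ) * Real.Gamma (ν + (k : ℝ) + 1))) *
    (x / 2) ^ (2 * (k : ℝ) + ν)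

/-- The derivative `J_ν'` of the Bessel function. -/
noncomputable def besselJDeriv (ν : ℝ) (x : ℝ) : ℝ := deriv (besselJ ν) x

/-- `besselJZero ν s` is the `s`-th positive zero of `J_ν` (for `s ≥ 1`),
listed in increasing order. -/
noncomputable def besselJZero (ν : ℝ) : ℕ → ℝ
  | 0 => 0
  | s + 1 => sInf {x : ℝ | besselJZero ν s < x ∧ besselJ ν x = 0}

/-- `besselJPrimeZero ν s` is the `s`-th positive zero of `J_ν'` (for `s ≥ 1`),
listed in increasing order. -/
noncomputable def besselJPrimeZero (ν : ℝ) : ℕ → ℝ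
  | 0 => 0
  | s + 1 => sInf {x : ℝ | besselJPrimeZero ν s < x ∧ besselJDeriv ν x = 0}

/-!
Since `x J_m' = m J_m - x J_{m+1}`, the ratio `J_m'/J_m` is `m/x - s` with `s = J_{m+1}/J_m`, so the
upper bound is `s > 0` and the lower bound says that `s` lies below the smaller root of
`x s² - (2m+1) s + x`. This quadratic is `P / J_m²` for
`P = x (J_m² + J_{m+1}²) - (2m+1) J_m J_{m+1}`, which vanishes at `0` and increases as long as
`J_m, J_{m+1} > 0`, because `P' = (2m+1) J_m J_{m+1} / x`. And `s` cannot cross `1` (which lies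
between the roots), since at `s = 1` the quadratic is `2x - (2m+1) ≤ 0`.

Positivity of `J_m` on `(0, m + 1/2]`: for `x² < 4(m+1)` the series is alternating with decreasing
terms. Beyond that, at a first zero `c` one would have `c J_m'(c) ≤ 0`, whereas `Z = x J_m'`
increases on `(0, m]` (there `Z' = (m²/x - x) J_m > 0`) and a comparison function `W` carries the
positivity of `Z` from `m` to `m + 1/2`.
-/

open scoped Nat Topology

lemma abs_natCast_le_two_pow (n : ℕ) : |(n : ℝ)| ≤ 2 ^ n := by
  rw [Nat.abs_cast]
  exact_mod_cast n.lt_two_pow_self.le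

lemma exists_first_nonpos {f : ℝ → ℝ} {a b : ℝ} (hab : a ≤ b) (hf : ContinuousOn f (Icc a b))
    (ha : 0 < f a) (hb : f b ≤ 0) : ∃ c ∈ Ioc a b, f c ≤ 0 ∧ ∀ y ∈ Ico a c, 0 < f y := by
  set T := Icc a b ∩ f ⁻¹' Iic 0
  have hT : IsClosed T := hf.preimage_isClosed_of_isClosed isClosed_Icc isClosed_Iic
  have hTb : BddBelow T := ⟨a, fun y hy ↦ hy.1.1⟩
  obtain ⟨⟨hac, hcb⟩, hc⟩ : sInf T ∈ T := hT.csInf_mem ⟨b, ⟨hab, le_rfl⟩, hb⟩ hTb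
  refine ⟨sInf T, ⟨hac.lt_of_ne ?_, hcb⟩, hc, fun y hy ↦ ?_⟩
  · rintro h
    exact (h ▸ hc : f a ≤ 0).not_gt ha
  · by_contra! hy'
    exact (csInf_le hTb ⟨⟨hy.1, hy.2.le.trans hcb⟩, hy'⟩).not_gt hy.2

lemma HasDerivAt.nonpos_of_le_of_mem_Ioo {f : ℝ → ℝ} {f' a c : ℝ} (hf : HasDerivAt f f' c)
    (hac : a < c) (h : ∀ y ∈ Ioo a c, f c ≤ f y) : f' ≤ 0 := by
  have hslope : Tendsto (slope f c) (𝓝[<] c) (𝓝 f') :=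
    hf.tendsto_slope.mono_left (nhdsWithin_mono _ fun _ hy ↦ ne_of_lt hy)
  refine le_of_tendsto hslope ?_
  filter_upwards [Ioo_mem_nhdsLT hac] with y hy
  rw [slope_def_field]
  exact div_nonpos_of_nonneg_of_nonpos (by linarith [h y hy]) (by linarith [hy.2])

lemma sin_nonneg_and_cos_nonneg_of_le_one {t : ℝ} (h0 : 0 ≤ t) (h1 : t ≤ 1) :
    0 ≤ Real.sin t ∧ 0 ≤ Real.cos t :=
  ⟨Real.sin_nonneg_of_nonneg_of_le_pi h0 (by linarith [Real.pi_gt_three]),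
    Real.cos_nonneg_of_mem_Icc ⟨by linarith [Real.pi_gt_three], by linarith [Real.pi_gt_three]⟩⟩

lemma sqrt_sq_sub_le_of_quadratic_pos {a x s : ℝ} (hx : 0 < x) (hq : 0 < x * s ^ 2 + x - a * s)
    (hs : 2 * x * s ≤ a) : √(a ^ 2 - 4 * x ^ 2) ≤ a - 2 * x * s :=
  Real.sqrt_le_iff.2 ⟨by linarith, by nlinarith⟩

namespace Bessel

noncomputable def coeff (m k : ℕ) : ℝ :=
  (-1) ^ k / (k ! * (m + k)! * 2 ^ (2 * k + m))

-- `besselJ m` with `Γ(m + k + 1) = (m + k)!` and natural powers (`besselJ_natCast`), so that it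
-- can be differentiated termwise.
noncomputable def J (m : ℕ) (x : ℝ) : ℝ := ∑' k, coeff m k * x ^ (2 * k + m)

noncomputable def J' (m : ℕ) (x : ℝ) : ℝ :=
  ∑' k, coeff m k * (((2 * k + m : ℕ) : ℝ) * x ^ (2 * k + m - 1))

lemma abs_coeff_le (m k : ℕ) : |coeff m k| ≤ 1 / k ! := by
  rw [coeff, abs_div, abs_pow, abs_neg, abs_one, one_pow, abs_of_pos (by positivity)]
  gcongr
  calc (k ! : ℝ) = k ! * 1 * 1 := by ring
    _ ≤ k ! * (m + k)! * 2 ^ (2 * k + m) := by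
      gcongr
      · exact_mod_cast (m + k).factorial_pos
      · exact one_le_pow₀ one_le_two

lemma abs_coeff_mul_le {m k e : ℕ} {a y S : ℝ} (hS : 1 ≤ S) (hy : |y| ≤ S) (he : e ≤ 2 * k + m)
    (ha : |a| ≤ 2 ^ (2 * k + m)) :
    |coeff m k * (a * y ^ e)| ≤ (4 * S ^ 2) ^ k / k ! * (2 * S) ^ m := by
  have hy' : |y| ^ e ≤ S ^ (2 * k + m) :=
    (pow_le_pow_left₀ (abs_nonneg y) hy e).trans (pow_le_pow_right₀ hS he)
  calc |coeff m k * (a * y ^ e)| = |coeff m k| * (|a| * |y| ^ e) := by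
        rw [abs_mul, abs_mul, abs_pow]
    _ ≤ 1 / k ! * (2 ^ (2 * k + m) * S ^ (2 * k + m)) := by
        gcongr
        exact abs_coeff_le m k
    _ = (4 * S ^ 2) ^ k / k ! * (2 * S) ^ m := by
        rw [pow_add, pow_mul, pow_add, pow_mul]; ring

lemma summable_coeff_mul (m : ℕ) (x : ℝ) {a : ℕ → ℝ} {e : ℕ → ℕ}
    (ha : ∀ k, |a k| ≤ 2 ^ (2 * k + m)) (he : ∀ k, e k ≤ 2 * k + m) :
    Summable fun k ↦ coeff m k * (a k * x ^ e k) :=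
  .of_norm_bounded ((Real.summable_pow_div_factorial _).mul_right ((2 * (|x| + 1)) ^ m))
    fun k ↦ abs_coeff_mul_le (by linarith [abs_nonneg x]) (by linarith) (he k) (ha k)

lemma summable_J (m : ℕ) (x : ℝ) : Summable fun k ↦ coeff m k * x ^ (2 * k + m) := by
  simpa using summable_coeff_mul m x (a := fun _ ↦ 1) (e := fun k ↦ 2 * k + m)
    (fun k ↦ by simpa using one_le_pow₀ one_le_two) fun _ ↦ le_rfl

lemma hasDerivAt_J (m : ℕ) (x : ℝ) : HasDerivAt (J m) (J' m x) x := by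
  have hx : x ∈ Metric.ball (0 : ℝ) (|x| + 1) := by simp
  refine hasDerivAt_tsum_of_isPreconnected
    ((Real.summable_pow_div_factorial _).mul_right ((2 * (|x| + 1)) ^ m)) Metric.isOpen_ball
    (convex_ball _ _).isPreconnected (fun _ y _ ↦ (hasDerivAt_pow _ y).const_mul _)
    (fun k y hy ↦ abs_coeff_mul_le (by linarith [abs_nonneg x]) ?_ (Nat.sub_le _ _)
      (abs_natCast_le_two_pow _)) hx (summable_J m x) hx
  simpa using (mem_ball_zero_iff.1 hy).le

@[fun_prop]
lemma continuous_J (m : ℕ) : Continuous (J m) :=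
  continuous_iff_continuousAt.2 fun x ↦ (hasDerivAt_J m x).continuousAt

lemma summable_J' (m : ℕ) (x : ℝ) :
    Summable fun k ↦ coeff m k * (((2 * k + m : ℕ) : ℝ) * x ^ (2 * k + m - 1)) :=
  summable_coeff_mul m x (fun _ ↦ abs_natCast_le_two_pow _) fun _ ↦ Nat.sub_le _ _

lemma coeff_eq_mul_coeff_succ (m k : ℕ) : coeff m k = (2 * k + 2 * m + 2) * coeff (m + 1) k := by
  rw [coeff, coeff, show m + 1 + k = m + k + 1 by omega, Nat.factorial_succ,
    show 2 * k + (m + 1) = 2 * k + m + 1 by omega, pow_succ]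
  push_cast
  field_simp
  ring

lemma mul_coeff_succ (m k : ℕ) : (2 * k + 2) * coeff m (k + 1) = -coeff (m + 1) k := by
  rw [coeff, coeff, show m + (k + 1) = m + 1 + k by omega, Nat.factorial_succ,
    show 2 * (k + 1) + m = 2 * k + (m + 1) + 1 by omega, pow_succ]
  push_cast
  field_simp
  ring

lemma hasSum_mul_J' (m : ℕ) (x : ℝ) :
    HasSum (fun k ↦ coeff m k * (((2 * k + m : ℕ) : ℝ) * x ^ (2 * k + m))) (x * J' m x) := by
  have h : HasSum (fun k ↦ x * (coeff m k * (((2 * k + m : ℕ) : ℝ) * x ^ (2 * k + m - 1))))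
      (x * J' m x) := (summable_J' m x).hasSum.mul_left x
  convert h using 2 with k
  cases 2 * k + m with
  | zero => simp
  | succ n =>
    rw [Nat.add_sub_cancel, pow_succ]
    ring

lemma mul_J' (m : ℕ) (x : ℝ) : x * J' m x = m * J m x - x * J (m + 1) x := by
  have hJ : HasSum (fun k ↦ m * (coeff m k * x ^ (2 * k + m))) (m * J m x) :=
    (summable_J m x).hasSum.mul_left _
  have hJ₁ : HasSum (fun k ↦ -x * (coeff (m + 1) k * x ^ (2 * k + (m + 1))))
      (-x * J (m + 1) x) := (summable_J (m + 1) x).hasSum.mul_left _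
  have hshift : HasSum (fun k ↦ coeff m (k + 1) * (2 * ((k + 1 : ℕ) : ℝ) * x ^ (2 * (k + 1) + m)))
      (-x * J (m + 1) x) := by
    convert hJ₁ using 2 with k
    rw [show 2 * (k + 1) + m = 2 * k + (m + 1) + 1 by omega, pow_succ]
    push_cast
    linear_combination x * x ^ (2 * k + (m + 1)) * mul_coeff_succ m k
  have hterm : HasSum (fun k : ℕ ↦ coeff m k * (2 * (k : ℝ) * x ^ (2 * k + m)))
      (-x * J (m + 1) x) := by
    simpa using HasSum.zero_add (f := fun k : ℕ ↦ coeff m k * (2 * (k : ℝ) * x ^ (2 * k + m)))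
      hshift
  refine (hasSum_mul_J' m x).unique ?_
  convert hJ.add hterm using 2 with k
  · push_cast
    ring
  · ring

lemma mul_J'_succ (m : ℕ) (x : ℝ) :
    x * J' (m + 1) x = x * J m x - (m + 1) * J (m + 1) x := by
  have hJ : HasSum (fun k ↦ x * (coeff m k * x ^ (2 * k + m))) (x * J m x) :=
    (summable_J m x).hasSum.mul_left _
  have hJ₁ : HasSum (fun k ↦ (m + 1) * (coeff (m + 1) k * x ^ (2 * k + (m + 1))))
      ((m + 1) * J (m + 1) x) := (summable_J (m + 1) x).hasSum.mul_left _
  have h : HasSum (fun k ↦ x * (coeff m k * x ^ (2 * k + m))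
      - (m + 1) * (coeff (m + 1) k * x ^ (2 * k + (m + 1)))) (x * J m x - (m + 1) * J (m + 1) x) :=
    hJ.sub hJ₁
  refine (hasSum_mul_J' (m + 1) x).unique ?_
  convert h using 2 with k
  rw [coeff_eq_mul_coeff_succ m k, show 2 * k + (m + 1) = 2 * k + m + 1 by omega, pow_succ]
  push_cast
  ring

noncomputable def term (m : ℕ) (x : ℝ) (k : ℕ) : ℝ :=
  x ^ (2 * k + m) / (k ! * (m + k)! * 2 ^ (2 * k + m))

lemma coeff_mul_pow (m k : ℕ) (x : ℝ) : coeff m k * x ^ (2 * k + m) = (-1) ^ k * term m x k := by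
  rw [coeff, term]
  ring

lemma term_succ (m k : ℕ) (x : ℝ) :
    term m x (k + 1) = x ^ 2 / (4 * (k + 1) * (m + k + 1)) * term m x k := by
  rw [term, term, show 2 * (k + 1) + m = 2 * k + m + 2 by omega,
    show m + (k + 1) = m + k + 1 by omega, Nat.factorial_succ, Nat.factorial_succ]
  push_cast
  field_simp
  ring

lemma term_zero_succ (m : ℕ) (x : ℝ) : term (m + 1) x 0 = x / (2 * (m + 1)) * term m x 0 := by
  simp only [term, Nat.factorial_zero, Nat.factorial_succ, mul_zero, zero_add, add_zero]
  push_cast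
  field_simp
  ring

lemma term_pos (m k : ℕ) {x : ℝ} (hx : 0 < x) : 0 < term m x k := by
  rw [term]
  positivity

lemma term_antitone (m : ℕ) {x : ℝ} (hx : 0 ≤ x) (hq : x ^ 2 ≤ 4 * (m + 1)) :
    Antitone (term m x) := by
  refine antitone_nat_of_succ_le fun k ↦ ?_
  rw [term_succ]
  have hk : (0 : ℝ) ≤ k := k.cast_nonneg
  have hratio : x ^ 2 / (4 * (k + 1) * (m + k + 1)) ≤ 1 := by
    rw [div_le_one (by positivity)]
    nlinarith
  exact mul_le_of_le_one_left (by rw [term]; positivity) hratio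

lemma J_bounds (m : ℕ) {x : ℝ} (hx : 0 ≤ x) (hq : x ^ 2 ≤ 4 * (m + 1)) :
    term m x 0 - term m x 1 ≤ J m x ∧ J m x ≤ term m x 0 := by
  have hsum : HasSum (fun k ↦ (-1) ^ k * term m x k) (J m x) := by
    simpa only [J, coeff_mul_pow] using (summable_J m x).hasSum
  have hanti := term_antitone m hx hq
  constructor
  · simpa [Finset.sum_range_succ] using hanti.alternating_series_le_tendsto hsum.tendsto_sum_nat 1
  · simpa using hanti.tendsto_le_alternating_series hsum.tendsto_sum_nat 0

lemma J_pos_of_sq_lt (m : ℕ) {x : ℝ} (hx : 0 < x) (hq : x ^ 2 < 4 * (m + 1)) : 0 < J m x := by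
  have hlow := (J_bounds m hx.le hq.le).1
  rw [term_succ] at hlow
  have hratio : x ^ 2 / (4 * (0 + 1) * (m + 0 + 1)) < 1 := by
    rw [div_lt_one (by positivity)]
    linarith
  nlinarith [term_pos m 0 hx]

lemma J_succ_half_lt (m : ℕ) : J (m + 1) (1 / 2) < J m (1 / 2) := by
  have hm : (0 : ℝ) ≤ m := m.cast_nonneg
  have hq : ∀ n : ℕ, (1 / 2 : ℝ) ^ 2 ≤ 4 * (n + 1) := fun n ↦ by
    nlinarith [n.cast_nonneg (α := ℝ)]
  have hlow := (J_bounds m (by norm_num) (hq m)).1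
  have hupp := (J_bounds (m + 1) (by norm_num) (hq (m + 1))).2
  rw [term_succ] at hlow
  rw [term_zero_succ] at hupp
  have ht := term_pos m 0 (x := 1 / 2) (by norm_num)
  have h1 : (1 / 2) / (2 * ((m : ℝ) + 1)) ≤ 1 / 4 := by
    rw [div_le_iff₀ (by positivity)]
    linarith
  have h2 : (1 / 2 : ℝ) ^ 2 / (4 * (0 + 1) * (m + 0 + 1)) ≤ 1 / 16 := by
    rw [div_le_iff₀ (by positivity)]
    linarith
  nlinarith

lemma J_zero {m : ℕ} (hm : m ≠ 0) : J m 0 = 0 := by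
  simp [J, hm]

noncomputable def Z (m : ℕ) (x : ℝ) : ℝ := m * J m x - x * J (m + 1) x

noncomputable def W (m : ℕ) (x : ℝ) : ℝ :=
  Z m x * Real.cos ((x - m) / 2) + x / 2 * Real.sin ((x - m) / 2) * J m x

noncomputable def P (m : ℕ) (x : ℝ) : ℝ :=
  x * (J (m + 1) x ^ 2 + J m x ^ 2) - (2 * m + 1) * J m x * J (m + 1) x

lemma J'_div_J (m : ℕ) {x : ℝ} (hx : x ≠ 0) (hJ : J m x ≠ 0) :
    J' m x / J m x = m / x - J (m + 1) x / J m x := by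
  field_simp
  linear_combination mul_J' m x

lemma P_eq_sq_mul (m : ℕ) {x : ℝ} (hJ : J m x ≠ 0) :
    P m x = J m x ^ 2 * (x * (J (m + 1) x / J m x) ^ 2 + x
      - (2 * m + 1) * (J (m + 1) x / J m x)) := by
  rw [P]
  field_simp

lemma Z_eq_mul_J' (m : ℕ) (x : ℝ) : Z m x = x * J' m x := (mul_J' m x).symm

lemma hasDerivAt_Z (m : ℕ) {y : ℝ} (hy : y ≠ 0) :
    HasDerivAt (Z m) ((m ^ 2 - y ^ 2) / y * J m y) y := by
  refine (((hasDerivAt_J m y).const_mul (m : ℝ)).sub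
    ((hasDerivAt_id' y).mul (hasDerivAt_J (m + 1) y)) : HasDerivAt (Z m) _ y).congr_deriv ?_
  rw [div_mul_eq_mul_div, eq_div_iff hy]
  linear_combination (m : ℝ) * mul_J' m y - y * mul_J'_succ m y

lemma hasDerivAt_W (m : ℕ) {y : ℝ} (hy : y ≠ 0) :
    HasDerivAt (W m) (J m y * (((m ^ 2 - y ^ 2) / y + y / 4) * Real.cos ((y - m) / 2)
      + Real.sin ((y - m) / 2) / 2)) y := by
  have hθ : HasDerivAt (fun y : ℝ ↦ (y - m) / 2) (1 / 2) y :=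
    ((hasDerivAt_id' y).sub_const _).div_const 2
  refine (((hasDerivAt_Z m hy).mul hθ.cos).add
    ((((hasDerivAt_id' y).div_const 2).mul hθ.sin).mul (hasDerivAt_J m y)) :
      HasDerivAt (W m) _ y).congr_deriv ?_
  simp only [Pi.mul_apply, Z_eq_mul_J']
  field_simp
  ring

lemma hasDerivAt_P (m : ℕ) {y : ℝ} (hy : y ≠ 0) :
    HasDerivAt (P m) ((2 * m + 1) / y * (J m y * J (m + 1) y)) y := by
  have hJ := hasDerivAt_J m y
  have hJ₁ := hasDerivAt_J (m + 1) y
  refine (((hasDerivAt_id' y).mul ((hJ₁.pow 2).add (hJ.pow 2))).sub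
    ((hJ.const_mul (2 * (m : ℝ) + 1)).mul hJ₁) : HasDerivAt (P m) _ y).congr_deriv ?_
  simp only [Pi.add_apply, Pi.pow_apply]
  rw [div_mul_eq_mul_div, eq_div_iff hy]
  linear_combination (2 * y * J m y - (2 * m + 1) * J (m + 1) y) * mul_J' m y
    + (2 * y * J (m + 1) y - (2 * m + 1) * J m y) * mul_J'_succ m y

lemma Z_pos (m : ℕ) {b : ℝ} (hb : 0 < b) (hbm : b ≤ m) (hJ : ∀ y ∈ Ioo 0 b, 0 < J m y) :
    0 < Z m b := by
  have hm : m ≠ 0 := by rintro rfl; simp at hbm; linarith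
  have hmono : StrictMonoOn (Z m) (Icc 0 b) := by
    refine strictMonoOn_of_hasDerivWithinAt_pos (f' := fun y ↦ (m ^ 2 - y ^ 2) / y * J m y)
      (convex_Icc 0 b) (by unfold Z; fun_prop)
      (fun y hy ↦ ?_) fun y hy ↦ ?_
    · rw [interior_Icc] at hy
      exact (hasDerivAt_Z m hy.1.ne').hasDerivWithinAt
    · rw [interior_Icc] at hy
      have hym : y ^ 2 < m ^ 2 := by nlinarith [hy.1, hy.2]
      exact mul_pos (div_pos (by linarith) hy.1) (hJ y hy)
  simpa [Z, J_zero hm] using hmono (left_mem_Icc.2 hb.le) (right_mem_Icc.2 hb.le) hb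

lemma Z_le_W (m : ℕ) (hm : 4 ≤ m) {b : ℝ} (hmb : m ≤ b) (hb : b ≤ m + 1 / 2)
    (hJ : ∀ y ∈ Ioo (m : ℝ) b, 0 < J m y) : Z m m ≤ W m b := by
  have hm' : (4 : ℝ) ≤ m := by exact_mod_cast hm
  have hmono : MonotoneOn (W m) (Icc m b) := by
    refine monotoneOn_of_hasDerivWithinAt_nonneg (f' := fun y ↦ J m y *
      (((m ^ 2 - y ^ 2) / y + y / 4) * Real.cos ((y - m) / 2) + Real.sin ((y - m) / 2) / 2))
      (convex_Icc _ b) (by unfold W Z; fun_prop)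
      (fun y hy ↦ ?_) fun y hy ↦ ?_
    · rw [interior_Icc] at hy
      exact (hasDerivAt_W m (by linarith [hy.1])).hasDerivWithinAt
    · rw [interior_Icc] at hy
      obtain ⟨hmy, hyb⟩ := hy
      have hy0 : 0 < y := by linarith
      obtain ⟨hsin, hcos⟩ := sin_nonneg_and_cos_nonneg_of_le_one (t := (y - m) / 2)
        (by linarith) (by linarith)
      have hcoef : 0 ≤ (m ^ 2 - y ^ 2) / y + y / 4 := by
        rw [div_add_div _ _ hy0.ne' four_ne_zero]
        exact div_nonneg (by nlinarith) (by positivity)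
      exact mul_nonneg (hJ y ⟨hmy, hyb⟩).le (by positivity)
  simpa [W] using hmono (left_mem_Icc.2 hmb) (right_mem_Icc.2 hmb) hmb

theorem J_pos (m : ℕ) {x : ℝ} (hx : 0 < x) (hxm : x ≤ m + 1 / 2) : 0 < J m x := by
  rcases lt_or_ge (x ^ 2) (4 * (m + 1)) with hq | hq
  · exact J_pos_of_sq_lt m hx hq
  have hm : 4 ≤ m := by
    by_contra! h
    have : (m : ℝ) ≤ 3 := by exact_mod_cast Nat.le_of_lt_succ h
    nlinarith [m.cast_nonneg (α := ℝ)]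
  have hm' : (4 : ℝ) ≤ m := by exact_mod_cast hm
  have hJ1 : 0 < J m 1 := J_pos_of_sq_lt m one_pos (by linarith)
  by_contra! hJx
  obtain ⟨c, ⟨h1c, hcx⟩, hJc, hJpos⟩ :=
    exists_first_nonpos (by nlinarith) (continuous_J m).continuousOn hJ1 hJx
  have hpos : ∀ y ∈ Ioo 0 c, 0 < J m y := fun y ⟨hy0, hyc⟩ ↦ by
    rcases lt_or_ge y 1 with hy1 | hy1
    · exact J_pos_of_sq_lt m hy0 (by nlinarith)
    · exact hJpos y ⟨hy1, hyc⟩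
  have hZc : Z m c ≤ 0 := by
    have hJ' : J' m c ≤ 0 := (hasDerivAt_J m c).nonpos_of_le_of_mem_Ioo h1c
      fun y hy ↦ hJc.trans (hJpos y ⟨hy.1.le, hy.2⟩).le
    rw [Z_eq_mul_J']
    exact mul_nonpos_of_nonneg_of_nonpos (by linarith) hJ'
  rcases le_or_gt c m with hcm | hmc
  · exact (Z_pos m (by linarith) hcm hpos).not_ge hZc
  · have hZm := Z_pos m (b := m) (by linarith) le_rfl fun y hy ↦ hpos y ⟨hy.1, hy.2.trans hmc⟩
    have hWc := Z_le_W m hm hmc.le (by linarith) fun y hy ↦ hpos y ⟨by linarith [hy.1], hy.2⟩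
    obtain ⟨hsin, hcos⟩ := sin_nonneg_and_cos_nonneg_of_le_one (t := (c - m) / 2)
      (by linarith) (by linarith)
    have hWc' : W m c ≤ 0 := by
      rw [W]
      nlinarith [mul_nonneg (by linarith : (0 : ℝ) ≤ c / 2) hsin]
    linarith

theorem P_pos (m : ℕ) {x : ℝ} (hx : 0 < x) (hxm : x ≤ m + 1 / 2) : 0 < P m x := by
  have hmono : StrictMonoOn (P m) (Icc 0 x) := by
    refine strictMonoOn_of_hasDerivWithinAt_pos
      (f' := fun y ↦ (2 * m + 1) / y * (J m y * J (m + 1) y))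
      (convex_Icc 0 x) (by unfold P; fun_prop) (fun y hy ↦ ?_) fun y hy ↦ ?_
    · rw [interior_Icc] at hy
      exact (hasDerivAt_P m hy.1.ne').hasDerivWithinAt
    · rw [interior_Icc] at hy
      have hJ := J_pos m hy.1 (by linarith [hy.2])
      have hJ₁ := J_pos (m + 1) hy.1 (by push_cast; linarith [hy.2])
      exact mul_pos (div_pos (by positivity) hy.1) (mul_pos hJ hJ₁)
  simpa [P, J_zero] using hmono (left_mem_Icc.2 hx.le) (right_mem_Icc.2 hx.le) hx

theorem J_succ_lt (m : ℕ) {x : ℝ} (hx : 0 < x) (hxm : x ≤ m + 1 / 2) : J (m + 1) x < J m x := by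
  by_contra! hle
  have hhalf : (1 / 2 : ℝ) ∈ Ioc (0 : ℝ) (m + 1 / 2) :=
    ⟨by norm_num, by linarith [m.cast_nonneg (α := ℝ)]⟩
  obtain ⟨y, ⟨hy0, hym⟩, hy⟩ := isPreconnected_Ioc.intermediate_value ⟨hx, hxm⟩ hhalf
    (((continuous_J m).sub (continuous_J (m + 1))).continuousOn)
    ⟨sub_nonpos.2 hle, sub_nonneg.2 (J_succ_half_lt m).le⟩
  have hP := P_pos m hy0 hym
  rw [P, (sub_eq_zero.1 hy).symm] at hP
  nlinarith [sq_nonneg (J m y)]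

lemma besselJ_natCast (m : ℕ) : besselJ m = J m := by
  ext x
  refine tsum_congr fun k ↦ ?_
  rw [show (m : ℝ) + k + 1 = (m + k : ℕ) + 1 by push_cast; ring, Real.Gamma_nat_eq_factorial,
    show 2 * (k : ℝ) + m = (2 * k + m : ℕ) by push_cast; ring, Real.rpow_natCast, coeff, div_pow]
  field_simp

lemma besselJDeriv_natCast (m : ℕ) : besselJDeriv m = J' m := by
  ext x
  rw [besselJDeriv, besselJ_natCast, (hasDerivAt_J m x).deriv]

end Bessel

/-- For every integer `m ≥ 0` and `0 < x ≤ m + 1/2`: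
`(√((2m+1)² - 4x²) - 1)/(2x) ≤ J_m'(x)/J_m(x) < m/x`. -/
theorem stmt7 (m : ℕ) (x : ℝ) (hx0 : 0 < x) (hx : x ≤ (m:ℝ) + 1/2) :
    (Real.sqrt ((2*(m:ℝ)+1)^2 - 4*x^2) - 1) / (2*x) ≤ besselJDeriv m x / besselJ m x ∧
    besselJDeriv m x / besselJ m x < (m:ℝ) / x := by
  open Bessel in
  have hJ := J_pos m hx0 hx
  have hJ₁ := J_pos (m + 1) hx0 (by push_cast; linarith)
  have hquad := P_pos m hx0 hx
  rw [P_eq_sq_mul m hJ.ne', mul_pos_iff_of_pos_left (by positivity)] at hquad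
  rw [besselJDeriv_natCast, besselJ_natCast, J'_div_J m hx0.ne' hJ.ne']
  set s := J (m + 1) x / J m x
  have hs1 : s < 1 := (div_lt_one hJ).2 (J_succ_lt m hx0 hx)
  have hsqrt := sqrt_sq_sub_le_of_quadratic_pos hx0 hquad (by nlinarith)
  have h2x : (m / x - s) * (2 * x) = 2 * m - 2 * x * s := by field_simp
  constructor
  · rw [div_le_iff₀ (by positivity), h2x]
    linarith
  · linarith [div_pos hJ₁ hJ]
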